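/- Optimization lemma for the modified three-group LP (|Z| = 1 case): Let X, Y be disjoint finite nonempty sets and |Z| = 1 with Z disjoint from X ∪ Y. The maximum of min{p_X + p_Y, p_Y + p_Z, p_Z + p_X} over nonnegative reals p_X, p_Y, p_Z with |X|·p_X + |Y|·p_Y + p_Z = 1 equals max{ 2/(|X|+|Y|+1), 1/(|X|+1), 1/(|Y|+1), 1/(|X|+|Y|) }. -/

import Mathlib

set_option maxHeartbeats 1000000


/-- Modified three-group LP with |Z| = 1: maximize min{p_X+p_Y, p_Y+p_Z, p_Z+p_X}
subject to |X| p_X + |Y| p_Y + p_Z = 1, p's nonnegative.  The maximum equals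
max{2/(|X|+|Y|+1), 1/(|X|+1), 1/(|Y|+1), 1/(|X|+|Y|)}. -/
theorem three_group_guessing_lp_singleton {α : Type} [DecidableEq α]
    (X Y Z : Finset α)
    (hXY : Disjoint X Y) (hXZ : Disjoint X Z) (hYZ : Disjoint Y Z)
    (hX : X.Nonempty) (hY : Y.Nonempty) (hZ : Z.card = 1) :
    IsGreatest
      { m : ℝ | ∃ pX pY pZ : ℝ, 0 ≤ pX ∧ 0 ≤ pY ∧ 0 ≤ pZ ∧
          (X.card : ℝ) * pX + (Y.card : ℝ) * pY + pZ = 1 ∧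
          m = min (min (pX + pY) (pY + pZ)) (pZ + pX) }
      (max (max (2 / ((X.card : ℝ) + Y.card + 1))
                (max (1 / ((X.card : ℝ) + 1)) (1 / ((Y.card : ℝ) + 1))))
           (1 / ((X.card : ℝ) + Y.card))) := by
  set x : ℝ := (X.card : ℝ) with hxdef
  set y : ℝ := (Y.card : ℝ) with hydef
  have hx : (1 : ℝ) ≤ x := Nat.one_le_cast.mpr (Finset.card_pos.mpr hX)
  have hy : (1 : ℝ) ≤ y := Nat.one_le_cast.mpr (Finset.card_pos.mpr hY)
  have hxy1 : (0:ℝ) < x + y + 1 := by linarith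
  have hx1 : (0:ℝ) < x + 1 := by linarith
  have hy1 : (0:ℝ) < y + 1 := by linarith
  have hxy : (0:ℝ) < x + y := by linarith
  set A : ℝ := 2 / (x + y + 1) with hA
  set B : ℝ := 1 / (x + 1) with hB
  set C : ℝ := 1 / (y + 1) with hC
  set D : ℝ := 1 / (x + y) with hD
  have hApos : 0 < A := by positivity
  have hBpos : 0 < B := by positivity
  have hCpos : 0 < C := by positivity
  have hDB : D ≤ B := by
    apply div_le_div_of_nonneg_left (by norm_num) hx1 (by linarith)
  constructor
  · -- membership
    have hAmem : A ∈ { m : ℝ | ∃ pX pY pZ : ℝ, 0 ≤ pX ∧ 0 ≤ pY ∧ 0 ≤ pZ ∧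
        x * pX + y * pY + pZ = 1 ∧
        m = min (min (pX + pY) (pY + pZ)) (pZ + pX) } := by
      refine ⟨1/(x+y+1), 1/(x+y+1), 1/(x+y+1), by positivity, by positivity,
        by positivity, by field_simp, ?_⟩
      simp only [min_self]
      rw [hA]; field_simp; ring
    have hBmem : B ∈ { m : ℝ | ∃ pX pY pZ : ℝ, 0 ≤ pX ∧ 0 ≤ pY ∧ 0 ≤ pZ ∧
        x * pX + y * pY + pZ = 1 ∧
        m = min (min (pX + pY) (pY + pZ)) (pZ + pX) } := by
      refine ⟨1/(x+1), 0, 1/(x+1), by positivity, le_refl _,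
        by positivity, by field_simp; ring, ?_⟩
      have h1 : (1/(x+1) + 0 : ℝ) = 1/(x+1) := by ring
      have h2 : (0 + 1/(x+1) : ℝ) = 1/(x+1) := by ring
      rw [h1, h2, min_self, min_eq_left (le_add_of_nonneg_left (by positivity : (0:ℝ) ≤ 1/(x+1)))]
    have hCmem : C ∈ { m : ℝ | ∃ pX pY pZ : ℝ, 0 ≤ pX ∧ 0 ≤ pY ∧ 0 ≤ pZ ∧
        x * pX + y * pY + pZ = 1 ∧
        m = min (min (pX + pY) (pY + pZ)) (pZ + pX) } := by
      refine ⟨0, 1/(y+1), 1/(y+1), le_refl _, by positivity,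
        by positivity, by field_simp; ring, ?_⟩
      have h1 : (0 + 1/(y+1) : ℝ) = 1/(y+1) := by ring
      have h2 : (1/(y+1) + 0 : ℝ) = 1/(y+1) := by ring
      rw [h1, h2]
      rw [min_eq_left (le_add_of_nonneg_left (by positivity : (0:ℝ) ≤ 1/(y+1)))]
      rw [min_self]
    have hDle : D ≤ max A (max B C) := le_trans hDB (le_trans (le_max_left B C) (le_max_right _ _))
    rw [max_eq_left hDle]
    rcases le_total (max B C) A with h | h
    · rwa [max_eq_left h]
    · rw [max_eq_right h]
      rcases le_total C B with h2 | h2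
      · rwa [max_eq_left h2]
      · rwa [max_eq_right h2]
  · -- upper bound
    rintro m ⟨pX, pY, pZ, hpX, hpY, hpZ, hsum, rfl⟩
    set m := min (min (pX + pY) (pY + pZ)) (pZ + pX) with hm
    have hm1 : m ≤ pX + pY := le_trans (min_le_left _ _) (min_le_left _ _)
    have hm2 : m ≤ pY + pZ := le_trans (min_le_left _ _) (min_le_right _ _)
    have hm3 : m ≤ pZ + pX := min_le_right _ _
    rcases le_total x (y + 1) with hcx | hcx
    · rcases le_total y (x + 1) with hcy | hcy
      · -- m ≤ A
        have : m ≤ A := by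
          rw [hA, le_div_iff₀ hxy1]
          nlinarith [mul_nonneg (show (0:ℝ) ≤ x + y - 1 by linarith)
              (sub_nonneg.mpr hm1),
            mul_nonneg (show (0:ℝ) ≤ y - x + 1 by linarith) (sub_nonneg.mpr hm2),
            mul_nonneg (show (0:ℝ) ≤ x - y + 1 by linarith) (sub_nonneg.mpr hm3)]
        exact le_trans this (le_trans (le_max_left _ _) (le_max_left _ _))
      · -- y ≥ x+1 : m ≤ B = 1/(x+1)
        have : m ≤ B := by
          rw [hB, le_div_iff₀ hx1]
          nlinarith [mul_nonneg (show (0:ℝ) ≤ y - (x+1) by linarith) hpY,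
            mul_nonneg (show (0:ℝ) ≤ x by linarith) (sub_nonneg.mpr hm1),
            sub_nonneg.mpr hm2]
        exact le_trans this (le_trans (le_trans (le_max_left B C) (le_max_right _ _))
          (le_max_left _ _))
    · -- x ≥ y+1 : m ≤ C = 1/(y+1)
      have : m ≤ C := by
        rw [hC, le_div_iff₀ hy1]
        nlinarith [mul_nonneg (show (0:ℝ) ≤ x - (y+1) by linarith) hpX,
          mul_nonneg (show (0:ℝ) ≤ y by linarith) (sub_nonneg.mpr hm1),
          sub_nonneg.mpr hm3]
      exact le_trans this (le_trans (le_trans (le_max_right B C) (le_max_right _ _))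
        (le_max_left _ _))
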